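/- Let A : X → ℝ be θ-Hölder for some θ ∈ (0,1]. For all points x, x̄, x̄̄ ∈ X and every sequence (x̄^l) in X converging to x̄, one has h_A(x, x̄̄) ≤ liminf_{l→+∞} φ_A(x, x̄^l) + h_A(x̄, x̄̄), the inequality being understood in ℝ ∪ {+∞} (any sum involving +∞ equals +∞). In particular, h_A(x, x̄̄) ≤ φ_A(x, x̄) + h_A(x̄, x̄̄) and h_A satisfies the triangle inequality h_A(x, x̄̄) ≤ h_A(x, x̄) + h_A(x̄, x̄̄). -/

import Mathlib

open MeasureTheory Filter Topology

section GLT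

variable {X : Type*} [MetricSpace X]

/-- A transitive expanding dynamical system: a continuous, surjective, open,
several-to-one map whose inverse branches are uniformly contracting, and which
is topologically transitive. -/
structure IsExpandingTransitive (T : X → X) : Prop where
  cont : Continuous T
  surj : Function.Surjective T
  isOpenMap : IsOpenMap T
  finite_preimages : ∀ x : X, {y : X | T y = x}.Finite
  transitive : ∀ U V : Set X, IsOpen U → IsOpen V → U.Nonempty → V.Nonempty →
    ∃ n : ℕ, ((T^[n]) ⁻¹' U ∩ V).Nonempty
  contracting : ∃ lam : ℝ, 0 < lam ∧ lam < 1 ∧ ∃ δ : ℝ, 0 < δ ∧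
    ∀ x y : X, dist x y ≤ δ → dist x y ≤ lam * dist (T x) (T y)

/-- `Abar` is the ergodic minimizing value of `A`: the minimum (attained) of
`∫ A dμ` over all `T`-invariant Borel probability measures `μ`. -/
def IsErgMinValue [MeasurableSpace X] (T : X → X) (A : X → ℝ) (Abar : ℝ) : Prop :=
  (∃ μ : Measure X, IsProbabilityMeasure μ ∧ MeasurePreserving T μ μ ∧ (∫ x, A x ∂μ) = Abar) ∧
  ∀ μ : Measure X, IsProbabilityMeasure μ → MeasurePreserving T μ μ → Abar ≤ ∫ x, A x ∂μ

/-- `f` is θ-Hölder. -/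
def IsThetaHolder (θ : ℝ) (f : X → ℝ) : Prop :=
  ∃ C : ℝ, 0 ≤ C ∧ ∀ x y : X, |f x - f y| ≤ C * dist x y ^ θ

/-- `u` is a (continuous) sub-action for `A` with ergodic minimizing value `Abar`. -/
def IsSubaction (T : X → X) (A : X → ℝ) (Abar : ℝ) (u : X → ℝ) : Prop :=
  Continuous u ∧ ∀ x : X, u (T x) - u x + Abar ≤ A x

/-- The contact locus of a sub-action `u`. -/
def contactLocus (T : X → X) (A : X → ℝ) (Abar : ℝ) (u : X → ℝ) : Set X :=
  {x : X | A x = u (T x) - u x + Abar}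

/-- The set `Ω(A)` of non-wandering points with respect to `A`. -/
def nonwanderingSet (T : X → X) (A : X → ℝ) (Abar : ℝ) : Set X :=
  {x : X | ∀ ε : ℝ, 0 < ε → ∃ k : ℕ, 1 ≤ k ∧ ∃ y : X,
    dist x y < ε ∧ dist x (T^[k] y) < ε ∧
    |∑ j ∈ Finset.range k, (A (T^[j] y) - Abar)| < ε}

/-- `u` is a calibrated sub-action: `u x = min_{T y = x} [u y + A y - Abar]`,
the minimum being attained. -/
def IsCalibrated (T : X → X) (A : X → ℝ) (Abar : ℝ) (u : X → ℝ) : Prop :=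
  Continuous u ∧ ∀ x : X,
    (∀ y : X, T y = x → u x ≤ u y + A y - Abar) ∧
    (∃ y : X, T y = x ∧ u x = u y + A y - Abar)

/-- `S_A^ε(x, x', k)`: infimum of Birkhoff sums of `A - Abar` over orbit segments of
length `k` starting within `ε` of `x` and ending within `ε` of `x'`
(`sInf ∅ = ⊤` in `EReal`). -/
noncomputable def birkhoffInf (T : X → X) (A : X → ℝ) (Abar : ℝ) (ε : ℝ) (x x' : X)
    (k : ℕ) : EReal :=
  sInf {v : EReal | ∃ z : X, dist z x < ε ∧ dist (T^[k] z) x' < ε ∧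
    v = ((∑ j ∈ Finset.range k, (A (T^[j] z) - Abar) : ℝ) : EReal)}

/-- The Mañé potential `φ_A(x, x') = lim_{ε→0} inf_{k ≥ 1} S_A^ε(x, x', k)`;
since the quantity is nonincreasing in `ε`, the limit as `ε → 0` is the
supremum over `ε > 0`. -/
noncomputable def manePotential (T : X → X) (A : X → ℝ) (Abar : ℝ) (x x' : X) : EReal :=
  ⨆ ε : {e : ℝ // 0 < e}, ⨅ k : {n : ℕ // 1 ≤ n}, birkhoffInf T A Abar ε.1 x x' k.1

/-- The Peierls barrier `h_A(x, x') = lim_{ε→0} liminf_{k→∞} S_A^ε(x, x', k)`;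
since the quantity is nonincreasing in `ε`, the limit as `ε → 0` is the
supremum over `ε > 0`. -/
noncomputable def peierlsBarrier (T : X → X) (A : X → ℝ) (Abar : ℝ) (x x' : X) : EReal :=
  ⨆ ε : {e : ℝ // 0 < e},
    Filter.liminf (fun k : ℕ => birkhoffInf T A Abar ε.1 x x' k) Filter.atTop

/-- `C` is an irreducible component of `Ω(A)`: an equivalence class of the
relation `x ∼ x' ↔ h_A(x, x') + h_A(x', x) = 0` on `Ω(A)`. -/
def IsIrredComponent (T : X → X) (A : X → ℝ) (Abar : ℝ) (C : Set X) : Prop :=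
  ∃ x ∈ nonwanderingSet T A Abar, C = {y ∈ nonwanderingSet T A Abar |
    peierlsBarrier T A Abar x y + peierlsBarrier T A Abar y x = 0}

/-- The θ-Hölder norm `‖f‖_θ = sup |f| + sup_{x ≠ y} |f x - f y| / d(x,y)^θ`. -/
noncomputable def holderNorm (θ : ℝ) (f : X → ℝ) : ℝ :=
  (⨆ x : X, |f x|) +
    ⨆ p : {p : X × X // p.1 ≠ p.2}, |f p.1.1 - f p.1.2| / dist p.1.1 p.1.2 ^ θ

end GLT

/-!
Inverse branches of `T` are uniformly contracting, so an orbit segment that ends within a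
small distance `D` of the start of another one is shadowed by a single true orbit following
both; by Hölder continuity of `A` this costs at most `K * D ^ θ` in the Birkhoff sum, a
geometric series in the contraction rate. Gluing a nearly optimal segment from `x` to `x̄ₗ`
(from `φ_A`) to segments from `x̄` to `x̄̄` of arbitrarily large length (from `h_A`) gives the
inequality. When one side is `-∞`, the other leg is replaced by a connecting orbit provided
by transitivity, whose Birkhoff sum is finite.
-/

open Set Metric

section Lifting

variable {X : Type*} [MetricSpace X] {T : X → X}

theorem IsOpenMap.exists_uniform_local_preimage [CompactSpace X] (hc : Continuous T)
    (ho : IsOpenMap T) {r : ℝ} (hr : 0 < r) :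
    ∃ δ > 0, ∀ p q : X, dist q (T p) < δ → ∃ p', T p' = q ∧ dist p' p < r := by
  have hgraph : IsCompact (range fun p => (p, T p)) := isCompact_range (continuous_id.prodMk hc)
  obtain ⟨δ, hδ, hcover⟩ := lebesgue_number_lemma_of_metric hgraph
    (c := fun y => ball y (r / 2) ×ˢ (T '' ball y (r / 2)))
    (fun y => isOpen_ball.prod (ho _ isOpen_ball))
    (by
      rintro _ ⟨p, rfl⟩
      exact mem_iUnion.2 ⟨p, mem_ball_self (by linarith), mem_image_of_mem T (mem_ball_self (by linarith))⟩)
  refine ⟨δ, hδ, fun p q hq => ?_⟩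
  obtain ⟨y, hy⟩ := hcover _ ⟨p, rfl⟩
  obtain ⟨hp, p', hp', rfl⟩ := hy (show (p, q) ∈ ball (p, T p) δ by
    simpa [Prod.dist_eq, hδ] using hq)
  exact ⟨p', rfl, (dist_triangle_right p' p y).trans_lt (by linarith [mem_ball.1 hp, mem_ball.1 hp'])⟩

theorem exists_iterate_preimage_shadowing {δ lam : ℝ} (hlam0 : 0 ≤ lam) (hlam1 : lam ≤ 1)
    (hlift : ∀ p q : X, dist q (T p) < δ → ∃ p', T p' = q ∧ dist p' p ≤ lam * dist q (T p)) :
    ∀ (n : ℕ) (p q : X), dist q (T^[n] p) < δ → ∃ w, T^[n] w = q ∧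
      ∀ j ≤ n, dist (T^[j] w) (T^[j] p) ≤ lam ^ (n - j) * dist q (T^[n] p) := by
  intro n
  induction n with
  | zero =>
    refine fun p q _ => ⟨q, rfl, fun j hj => ?_⟩
    obtain rfl := Nat.le_zero.1 hj
    simp
  | succ n ih =>
    intro p q hq
    rw [Function.iterate_succ_apply'] at hq ⊢
    obtain ⟨q', rfl, hq'⟩ := hlift _ q hq
    obtain ⟨w, rfl, hw⟩ := ih p q' (hq'.trans_lt ((mul_le_of_le_one_left dist_nonneg hlam1).trans_lt hq))
    refine ⟨w, Function.iterate_succ_apply' T n w, fun j hj => ?_⟩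
    rcases hj.eq_or_lt with rfl | hj
    · simp [Function.iterate_succ_apply']
    calc dist (T^[j] w) (T^[j] p) ≤ lam ^ (n - j) * dist (T^[n] w) (T^[n] p) := hw j (by omega)
      _ ≤ lam ^ (n - j) * (lam * dist (T (T^[n] w)) (T (T^[n] p))) := by gcongr
      _ = lam ^ (n + 1 - j) * dist (T (T^[n] w)) (T (T^[n] p)) := by
        rw [← mul_assoc, ← pow_succ, Nat.sub_add_comm (by omega)]

end Lifting

section Gluing

variable {X : Type*} [MetricSpace X] {T : X → X} {g : X → ℝ} {θ : ℝ}

theorem IsThetaHolder.continuous (hg : IsThetaHolder θ g) (hθ : 0 < θ) : Continuous g := by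
  obtain ⟨C, -, hC⟩ := hg
  refine continuous_iff_continuousAt.2 fun x => tendsto_iff_dist_tendsto_zero.2 ?_
  have hlim : Tendsto (fun y => C * dist y x ^ θ) (𝓝 x) (𝓝 0) := by
    have := ((((continuous_id.dist (continuous_const (y := x))).rpow_const
      fun _ => Or.inr hθ.le).const_mul C).tendsto x)
    simpa [Real.zero_rpow hθ.ne'] using this
  exact squeeze_zero (fun _ => dist_nonneg) (fun y => (Real.dist_eq _ _).trans_le (hC y x)) hlim

theorem IsThetaHolder.sub_const (hg : IsThetaHolder θ g) (c : ℝ) :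
    IsThetaHolder θ (fun y => g y - c) := by
  obtain ⟨C, hC, hgC⟩ := hg
  exact ⟨C, hC, fun p q => by simpa using hgC p q⟩

theorem geom_sum_range_pow_sub_le {r : ℝ} (hr0 : 0 ≤ r) (hr1 : r < 1) (n : ℕ) :
    ∑ j ∈ Finset.range n, r ^ (n - j) ≤ 1 / (1 - r) := by
  calc ∑ j ∈ Finset.range n, r ^ (n - j) ≤ ∑ j ∈ Finset.range n, r ^ (n - 1 - j) :=
        Finset.sum_le_sum fun j _ => pow_le_pow_of_le_one hr0 hr1.le (by omega)
    _ = ∑ j ∈ Finset.range n, r ^ j := Finset.sum_range_reflect (r ^ ·) n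
    _ ≤ r ^ 0 / (1 - r) := by
        simpa only [Finset.range_eq_Ico] using geom_sum_Ico_le_of_lt_one hr0 hr1
    _ = 1 / (1 - r) := by rw [pow_zero]

theorem birkhoffSum_le_of_shadowing {C lam D : ℝ} (hθ : 0 < θ) (hC : 0 ≤ C)
    (hlam0 : 0 ≤ lam) (hlam1 : lam < 1) (hD : 0 ≤ D)
    (hg : ∀ x y, |g x - g y| ≤ C * dist x y ^ θ) {n : ℕ} {w p : X}
    (hwp : ∀ j ≤ n, dist (T^[j] w) (T^[j] p) ≤ lam ^ (n - j) * D) :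
    birkhoffSum T g n w ≤ birkhoffSum T g n p + C / (1 - lam ^ θ) * D ^ θ := by
  have hr1 : lam ^ θ < 1 := Real.rpow_lt_one hlam0 hlam1 hθ
  have hterm : ∀ j ∈ Finset.range n,
      g (T^[j] w) ≤ g (T^[j] p) + C * D ^ θ * (lam ^ θ) ^ (n - j) := by
    intro j hj
    have hdist := hwp j (Finset.mem_range.1 hj).le
    calc g (T^[j] w) ≤ g (T^[j] p) + C * dist (T^[j] w) (T^[j] p) ^ θ := by
          linarith [le_abs_self (g (T^[j] w) - g (T^[j] p)), hg (T^[j] w) (T^[j] p)]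
      _ ≤ g (T^[j] p) + C * (lam ^ (n - j) * D) ^ θ := by gcongr
      _ = g (T^[j] p) + C * D ^ θ * (lam ^ θ) ^ (n - j) := by
        rw [Real.mul_rpow (pow_nonneg hlam0 _) hD, ← Real.rpow_pow_comm hlam0]
        ring
  calc birkhoffSum T g n w
      ≤ ∑ j ∈ Finset.range n, (g (T^[j] p) + C * D ^ θ * (lam ^ θ) ^ (n - j)) :=
        Finset.sum_le_sum hterm
    _ = birkhoffSum T g n p + C * D ^ θ * ∑ j ∈ Finset.range n, (lam ^ θ) ^ (n - j) := by
        rw [Finset.sum_add_distrib, ← Finset.mul_sum, birkhoffSum]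
    _ ≤ birkhoffSum T g n p + C * D ^ θ * (1 / (1 - lam ^ θ)) := by
        gcongr
        exact geom_sum_range_pow_sub_le (Real.rpow_nonneg hlam0 θ) hr1 n
    _ = birkhoffSum T g n p + C / (1 - lam ^ θ) * D ^ θ := by ring

def GluesOrbits (T : X → X) (g : X → ℝ) (θ δ K : ℝ) : Prop :=
  ∀ (z₁ z₂ : X) (k₁ k₂ : ℕ), dist z₂ (T^[k₁] z₁) < δ → ∃ w, dist w z₁ ≤ dist z₂ (T^[k₁] z₁) ∧
    T^[k₁ + k₂] w = T^[k₂] z₂ ∧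
    birkhoffSum T g (k₁ + k₂) w ≤
      birkhoffSum T g k₁ z₁ + birkhoffSum T g k₂ z₂ + K * dist z₂ (T^[k₁] z₁) ^ θ

theorem exists_gluesOrbits [CompactSpace X] (hc : Continuous T) (ho : IsOpenMap T)
    {lam δ : ℝ} (hlam0 : 0 ≤ lam) (hlam1 : lam < 1) (hδ : 0 < δ)
    (hcontr : ∀ x y : X, dist x y ≤ δ → dist x y ≤ lam * dist (T x) (T y))
    (hθ : 0 < θ) (hg : IsThetaHolder θ g) :
    ∃ δ' > 0, ∃ K ≥ 0, GluesOrbits T g θ δ' K := by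
  obtain ⟨C, hC, hgC⟩ := hg
  obtain ⟨δ', hδ', hpre⟩ := ho.exists_uniform_local_preimage hc hδ
  have hlift : ∀ p q, dist q (T p) < δ' → ∃ p', T p' = q ∧ dist p' p ≤ lam * dist q (T p) := by
    intro p q hq
    obtain ⟨p', rfl, hp'⟩ := hpre p q hq
    exact ⟨p', rfl, hcontr p' p hp'.le⟩
  refine ⟨δ', hδ', C / (1 - lam ^ θ),
    div_nonneg hC (sub_nonneg.2 (Real.rpow_lt_one hlam0 hlam1 hθ).le),
    fun z₁ z₂ k₁ k₂ hgap => ?_⟩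
  obtain ⟨w, hw, hshadow⟩ :=
    exists_iterate_preimage_shadowing hlam0 hlam1.le hlift k₁ z₁ z₂ hgap
  have hw₀ := hshadow 0 k₁.zero_le
  simp only [Function.iterate_zero_apply, Nat.sub_zero] at hw₀
  refine ⟨w, hw₀.trans (mul_le_of_le_one_left dist_nonneg (pow_le_one₀ hlam0 hlam1.le)),
    by rw [add_comm, Function.iterate_add_apply, hw], ?_⟩
  rw [birkhoffSum_add, hw]
  linarith [birkhoffSum_le_of_shadowing hθ hC hlam0 hlam1 dist_nonneg hgC hshadow]

end Gluing

section BirkhoffInf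

variable {X : Type*} [MetricSpace X] {T : X → X} {A : X → ℝ} {Abar : ℝ}

theorem birkhoffInf_le {ε : ℝ} {x x' z : X} {k : ℕ} (hz : dist z x < ε)
    (hz' : dist (T^[k] z) x' < ε) :
    birkhoffInf T A Abar ε x x' k ≤ ((birkhoffSum T (fun y => A y - Abar) k z : ℝ) : EReal) :=
  sInf_le ⟨z, hz, hz', rfl⟩

theorem birkhoffInf_lt_iff {ε : ℝ} {x x' : X} {k : ℕ} {b : EReal} :
    birkhoffInf T A Abar ε x x' k < b ↔ ∃ z : X, dist z x < ε ∧ dist (T^[k] z) x' < ε ∧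
      ((birkhoffSum T (fun y => A y - Abar) k z : ℝ) : EReal) < b := by
  rw [birkhoffInf, sInf_lt_iff]
  constructor
  · rintro ⟨_, ⟨z, hz, hz', rfl⟩, hb⟩
    exact ⟨z, hz, hz', hb⟩
  · rintro ⟨z, hz, hz', hb⟩
    exact ⟨_, ⟨z, hz, hz', rfl⟩, hb⟩

theorem lt_of_birkhoffInf_lt_neg {B ρ : ℝ} {x y : X} {k N : ℕ} (hB : 0 < B)
    (hbound : ∀ p, -B ≤ A p - Abar)
    (h : birkhoffInf T A Abar ρ x y k < ((-(N * B) : ℝ) : EReal)) : N < k := by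
  obtain ⟨z, -, -, hz⟩ := birkhoffInf_lt_iff.1 h
  have hsum : -(k * B) ≤ birkhoffSum T (fun y => A y - Abar) k z := by
    simpa [birkhoffSum] using Finset.card_nsmul_le_sum (Finset.range k) _ (-B)
      fun j _ => hbound (T^[j] z)
  have : (N : ℝ) * B < k * B := by linarith [EReal.coe_lt_coe_iff.1 hz]
  exact_mod_cast lt_of_mul_lt_mul_right this hB.le

theorem birkhoffInf_add_le {θ δ K ε ρ a b : ℝ} {x y y' z : X} {k₁ k₂ : ℕ}
    (hglue : GluesOrbits T (fun y => A y - Abar) θ δ K) (hK : 0 ≤ K) (hθ : 0 ≤ θ)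
    (hρδ : 3 * ρ ≤ δ) (hρε : 4 * ρ ≤ ε) (hy : dist y y' < ρ)
    (h₁ : birkhoffInf T A Abar ρ x y k₁ < a) (h₂ : birkhoffInf T A Abar ρ y' z k₂ < b) :
    birkhoffInf T A Abar ε x z (k₁ + k₂) ≤ ((a + b + K * (3 * ρ) ^ θ : ℝ) : EReal) := by
  obtain ⟨z₁, hz₁, hz₁', hsum₁⟩ := birkhoffInf_lt_iff.1 h₁
  obtain ⟨z₂, hz₂, hz₂', hsum₂⟩ := birkhoffInf_lt_iff.1 h₂
  have hgap : dist z₂ (T^[k₁] z₁) < 3 * ρ := by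
    linarith [dist_triangle4 z₂ y' y (T^[k₁] z₁), dist_comm y y', dist_comm y (T^[k₁] z₁)]
  obtain ⟨w, hw, hend, hsum⟩ := hglue z₁ z₂ k₁ k₂ (hgap.trans_le hρδ)
  have hρ : 0 < ρ := dist_nonneg.trans_lt hy
  refine (birkhoffInf_le (z := w) ?_ ?_).trans (EReal.coe_le_coe_iff.2 ?_)
  · linarith [dist_triangle w z₁ x]
  · rw [hend]; linarith
  · have : K * dist z₂ (T^[k₁] z₁) ^ θ ≤ K * (3 * ρ) ^ θ := by gcongr
    linarith [EReal.coe_lt_coe_iff.1 hsum₁, EReal.coe_lt_coe_iff.1 hsum₂]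

theorem liminf_birkhoffInf_le_of_frequently {θ δ K ε ρ a b : ℝ} {x y' z : X}
    (hglue : GluesOrbits T (fun y => A y - Abar) θ δ K) (hK : 0 ≤ K) (hθ : 0 ≤ θ)
    (hρδ : 3 * ρ ≤ δ) (hρε : 4 * ρ ≤ ε)
    (h : ∃ᶠ k in atTop, ∃ k₁ k₂ y, k₁ + k₂ = k ∧ dist y y' < ρ ∧
      birkhoffInf T A Abar ρ x y k₁ < a ∧ birkhoffInf T A Abar ρ y' z k₂ < b) :
    liminf (fun k => birkhoffInf T A Abar ε x z k) atTop ≤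
      ((a + b + K * (3 * ρ) ^ θ : ℝ) : EReal) :=
  liminf_le_of_frequently_le' <| h.mono fun _ ⟨_, _, _, hk, hy, h₁, h₂⟩ =>
    hk ▸ birkhoffInf_add_le hglue hK hθ hρδ hρε hy h₁ h₂

theorem exists_birkhoffInf_lt_of_liminf_manePotential_lt {ρ : ℝ} {a : EReal} {x xb : X}
    {xl : ℕ → X} (hxl : Tendsto xl atTop (𝓝 xb)) (hρ : 0 < ρ)
    (h : liminf (fun l => manePotential T A Abar x (xl l)) atTop < a) :
    ∃ y k, dist y xb < ρ ∧ birkhoffInf T A Abar ρ x y k < a := by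
  obtain ⟨l, hl, hxl⟩ := ((frequently_lt_of_liminf_lt (by isBoundedDefault) h).and_eventually
    (hxl.eventually (ball_mem_nhds xb hρ))).exists
  obtain ⟨k, hk⟩ := iInf_lt_iff.1 ((le_iSup (fun ε : {e : ℝ // 0 < e} =>
    ⨅ k : {n : ℕ // 1 ≤ n}, birkhoffInf T A Abar ε.1 x (xl l) k.1) ⟨ρ, hρ⟩).trans_lt hl)
  exact ⟨xl l, k, hxl, hk⟩

theorem frequently_birkhoffInf_lt_of_peierlsBarrier_lt {ρ : ℝ} {b : EReal} {x y : X}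
    (hρ : 0 < ρ) (h : peierlsBarrier T A Abar x y < b) :
    ∃ᶠ k in atTop, birkhoffInf T A Abar ρ x y k < b :=
  frequently_lt_of_liminf_lt (by isBoundedDefault) <| (le_iSup (fun ε : {e : ℝ // 0 < e} =>
    liminf (fun k => birkhoffInf T A Abar ε.1 x y k) atTop) ⟨ρ, hρ⟩).trans_lt h

theorem exists_birkhoffInf_lt_coe_of_transitive
    (htrans : ∀ U V : Set X, IsOpen U → IsOpen V → U.Nonempty → V.Nonempty →
      ∃ n : ℕ, ((T^[n]) ⁻¹' U ∩ V).Nonempty) {ρ : ℝ} (hρ : 0 < ρ) (x y : X) :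
    ∃ (k : ℕ) (c : ℝ), birkhoffInf T A Abar ρ x y k < c := by
  obtain ⟨k, v, hvy, hvx⟩ := htrans (ball y ρ) (ball x ρ) isOpen_ball isOpen_ball
    ⟨y, mem_ball_self hρ⟩ ⟨x, mem_ball_self hρ⟩
  exact ⟨k, _, (birkhoffInf_le hvx hvy).trans_lt (EReal.coe_lt_coe_iff.2 (lt_add_one _))⟩

theorem manePotential_le_peierlsBarrier (x y : X) :
    manePotential T A Abar x y ≤ peierlsBarrier T A Abar x y := by
  refine iSup_mono fun ε => ?_
  rw [liminf_eq_iSup_iInf_of_nat]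
  refine le_iSup_of_le 1 (le_iInf₂ fun k hk => ?_)
  exact iInf_le (fun k : {n : ℕ // 1 ≤ n} => birkhoffInf T A Abar ε.1 x y k.1) ⟨k, hk⟩

end BirkhoffInf

theorem EReal.le_add_of_forall_coe_lt {p u v : EReal} (hu : u = ⊥ → ∀ M : ℝ, p ≤ M)
    (hv : v = ⊥ → ∀ M : ℝ, p ≤ M) (h : ∀ a b : ℝ, u < a → v < b → p ≤ a + b) :
    p ≤ u + v := by
  have hbot : (∀ M : ℝ, p ≤ M) → p = ⊥ := fun hM =>
    (EReal.eq_bot_iff_forall_lt p).2 fun y =>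
      (hM (y - 1)).trans_lt (EReal.coe_lt_coe_iff.2 (sub_one_lt y))
  by_cases hu' : u = ⊥
  · simp [hu', hbot (hu hu')]
  by_cases hv' : v = ⊥
  · simp [hv', hbot (hv hv')]
  refine EReal.le_add_of_forall_gt (.inl hu') (.inr hv') fun a' ha' b' hb' => ?_
  obtain ⟨a, hua, haa'⟩ := EReal.lt_iff_exists_real_btwn.1 ha'
  obtain ⟨b, hvb, hbb'⟩ := EReal.lt_iff_exists_real_btwn.1 hb'
  exact (h a b hua hvb).trans (add_le_add haa'.le hbb'.le)

theorem exists_small_radius {K θ δ ε η : ℝ} (hθ : 0 < θ) (hδ : 0 < δ) (hε : 0 < ε)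
    (hη : 0 < η) : ∃ ρ > 0, 3 * ρ ≤ δ ∧ 4 * ρ ≤ ε ∧ K * (3 * ρ) ^ θ < η := by
  have hlim : Tendsto (fun ρ : ℝ => K * (3 * ρ) ^ θ) (𝓝[>] 0) (𝓝 0) := by
    have := ((((continuous_const (y := (3 : ℝ))).mul continuous_id).rpow_const
      fun _ => Or.inr hθ.le).const_mul K).tendsto (0 : ℝ)
    simpa [Real.zero_rpow hθ.ne'] using this.mono_left nhdsWithin_le_nhds
  obtain ⟨ρ, hsmall, hρ, hρ'⟩ := ((hlim.eventually (gt_mem_nhds hη)).and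
    (Ioo_mem_nhdsGT (lt_min (div_pos hδ three_pos) (div_pos hε four_pos)))).exists
  exact ⟨ρ, hρ, by linarith [min_le_left (δ / 3) (ε / 4)],
    by linarith [min_le_right (δ / 3) (ε / 4)], hsmall⟩

section Barrier

variable {X : Type*} [MetricSpace X] {T : X → X} {A : X → ℝ} {Abar θ δ K ε : ℝ}

theorem liminf_birkhoffInf_le_of_peierlsBarrier_eq_bot
    (hglue : GluesOrbits T (fun y => A y - Abar) θ δ K) (hK : 0 ≤ K) (hθ : 0 < θ) (hδ : 0 < δ)
    (htrans : ∀ U V : Set X, IsOpen U → IsOpen V → U.Nonempty → V.Nonempty →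
      ∃ n : ℕ, ((T^[n]) ⁻¹' U ∩ V).Nonempty) (hε : 0 < ε) {x xb z : X}
    (hH : peierlsBarrier T A Abar xb z = ⊥) (M : ℝ) :
    liminf (fun k => birkhoffInf T A Abar ε x z k) atTop ≤ M := by
  obtain ⟨ρ, hρ, hρδ, hρε, -⟩ := exists_small_radius (K := K) hθ hδ hε one_pos
  obtain ⟨n, c, hc⟩ := exists_birkhoffInf_lt_coe_of_transitive htrans hρ x xb
  have hfreq := frequently_birkhoffInf_lt_of_peierlsBarrier_lt hρ
    (hH ▸ EReal.bot_lt_coe (M - c - K * (3 * ρ) ^ θ))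
  have := liminf_birkhoffInf_le_of_frequently hglue hK hθ.le hρδ hρε
    ((tendsto_add_atTop_nat n).frequently_map _
      (fun k hk => ⟨n, k, xb, add_comm n k, by simpa using hρ, hc, hk⟩) hfreq)
  exact this.trans_eq (by ring_nf)

theorem liminf_birkhoffInf_le_of_liminf_manePotential_eq_bot
    (hglue : GluesOrbits T (fun y => A y - Abar) θ δ K) (hK : 0 ≤ K) (hθ : 0 < θ) (hδ : 0 < δ)
    (htrans : ∀ U V : Set X, IsOpen U → IsOpen V → U.Nonempty → V.Nonempty →
      ∃ n : ℕ, ((T^[n]) ⁻¹' U ∩ V).Nonempty) {B : ℝ} (hB : 0 < B)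
    (hbound : ∀ p, -B ≤ A p - Abar) (hε : 0 < ε) {x xb z : X} {xl : ℕ → X}
    (hxl : Tendsto xl atTop (𝓝 xb))
    (hL : liminf (fun l => manePotential T A Abar x (xl l)) atTop = ⊥) (M : ℝ) :
    liminf (fun k => birkhoffInf T A Abar ε x z k) atTop ≤ M := by
  obtain ⟨ρ, hρ, hρδ, hρε, -⟩ := exists_small_radius (K := K) hθ hδ hε one_pos
  obtain ⟨n, c, hc⟩ := exists_birkhoffInf_lt_coe_of_transitive htrans hρ xb z
  set a := M - c - K * (3 * ρ) ^ θ
  -- Birkhoff sums are bounded below by `-k B`, so very negative ones come from long segments.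
  have hfreq : ∃ᶠ k in atTop, ∃ k₁ k₂ y, k₁ + k₂ = k ∧ dist y xb < ρ ∧
      birkhoffInf T A Abar ρ x y k₁ < a ∧ birkhoffInf T A Abar ρ xb z k₂ < c := by
    refine frequently_atTop.2 fun N => ?_
    obtain ⟨y, k₁, hy, hk₁⟩ := exists_birkhoffInf_lt_of_liminf_manePotential_lt hxl hρ
      (hL ▸ EReal.bot_lt_coe (min a (-(N * B))))
    have hN := lt_of_birkhoffInf_lt_neg hB hbound
      (hk₁.trans_le (EReal.coe_le_coe_iff.2 (min_le_right _ _)))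
    exact ⟨k₁ + n, by omega, k₁, n, y, rfl, hy,
      hk₁.trans_le (EReal.coe_le_coe_iff.2 (min_le_left _ _)), hc⟩
  exact (liminf_birkhoffInf_le_of_frequently hglue hK hθ.le hρδ hρε hfreq).trans_eq
    (by simp only [a]; ring_nf)

theorem liminf_birkhoffInf_le_add
    (hglue : GluesOrbits T (fun y => A y - Abar) θ δ K) (hK : 0 ≤ K) (hθ : 0 < θ) (hδ : 0 < δ)
    (hε : 0 < ε) {x xb z : X} {xl : ℕ → X} (hxl : Tendsto xl atTop (𝓝 xb)) {a b : ℝ}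
    (ha : liminf (fun l => manePotential T A Abar x (xl l)) atTop < a)
    (hb : peierlsBarrier T A Abar xb z < b) :
    liminf (fun k => birkhoffInf T A Abar ε x z k) atTop ≤ (a : EReal) + b := by
  obtain ⟨a', ha', ha'a⟩ := EReal.lt_iff_exists_real_btwn.1 ha
  obtain ⟨ρ, hρ, hρδ, hρε, hsmall⟩ :=
    exists_small_radius (K := K) hθ hδ hε (sub_pos.2 (EReal.coe_lt_coe_iff.1 ha'a))
  obtain ⟨y, k₁, hy, hk₁⟩ := exists_birkhoffInf_lt_of_liminf_manePotential_lt hxl hρ ha'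
  have := liminf_birkhoffInf_le_of_frequently hglue hK hθ.le hρδ hρε
    ((tendsto_add_atTop_nat k₁).frequently_map _
      (fun k hk => ⟨k₁, k, y, add_comm k₁ k, hy, hk₁, hk⟩)
      (frequently_birkhoffInf_lt_of_peierlsBarrier_lt hρ hb))
  exact this.trans (by rw [← EReal.coe_add, EReal.coe_le_coe_iff]; linarith)

end Barrier

theorem IsExpandingTransitive.peierlsBarrier_le_liminf_manePotential_add {X : Type*}
    [MetricSpace X] [CompactSpace X] {T : X → X} (hT : IsExpandingTransitive T) {θ : ℝ}
    (hθ : 0 < θ) {A : X → ℝ} (hA : IsThetaHolder θ A) (Abar : ℝ) {x xb z : X} {xl : ℕ → X}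
    (hxl : Tendsto xl atTop (𝓝 xb)) :
    peierlsBarrier T A Abar x z ≤
      liminf (fun l => manePotential T A Abar x (xl l)) atTop + peierlsBarrier T A Abar xb z := by
  obtain ⟨lam, hlam0, hlam1, δ₀, hδ₀, hcontr⟩ := hT.contracting
  have hA' := hA.sub_const Abar
  obtain ⟨δ, hδ, K, hK, hglue⟩ :=
    exists_gluesOrbits hT.cont hT.isOpenMap hlam0.le hlam1 hδ₀ hcontr hθ hA'
  obtain ⟨m, hm⟩ := (isCompact_range (hA'.continuous hθ)).bddBelow
  have hbound : ∀ p, -max (-m) 1 ≤ A p - Abar := fun p =>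
    (neg_le.2 (le_max_left _ _)).trans (hm ⟨p, rfl⟩)
  refine iSup_le fun ⟨ε, hε⟩ => EReal.le_add_of_forall_coe_lt
    (liminf_birkhoffInf_le_of_liminf_manePotential_eq_bot hglue hK hθ hδ hT.transitive
      (lt_max_of_lt_right one_pos) hbound hε hxl)
    (liminf_birkhoffInf_le_of_peierlsBarrier_eq_bot hglue hK hθ hδ hT.transitive hε)
    fun a b ha hb => liminf_birkhoffInf_le_add hglue hK hθ hδ hε hxl ha hb

theorem peierls_liminf_triangle_general {X : Type*} [MetricSpace X] [CompactSpace X]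
    (T : X → X) (hT : IsExpandingTransitive T)
    (θ : ℝ) (hθ0 : 0 < θ)
    (A : X → ℝ) (hA : IsThetaHolder θ A)
    (Abar : ℝ) :
    (∀ x xb z : X, ∀ xl : ℕ → X, Filter.Tendsto xl Filter.atTop (nhds xb) →
      peierlsBarrier T A Abar x z ≤
        Filter.liminf (fun l : ℕ => manePotential T A Abar x (xl l)) Filter.atTop +
          peierlsBarrier T A Abar xb z) ∧
    (∀ x y z : X, peierlsBarrier T A Abar x z ≤
      manePotential T A Abar x y + peierlsBarrier T A Abar y z) ∧
    (∀ x y z : X, peierlsBarrier T A Abar x z ≤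
      peierlsBarrier T A Abar x y + peierlsBarrier T A Abar y z) := by
  have hmane : ∀ x y z, peierlsBarrier T A Abar x z ≤
      manePotential T A Abar x y + peierlsBarrier T A Abar y z := fun x y z => by
    simpa using hT.peierlsBarrier_le_liminf_manePotential_add hθ0 hA Abar
      (tendsto_const_nhds (x := y) (f := atTop))
  exact ⟨fun x xb z xl hxl => hT.peierlsBarrier_le_liminf_manePotential_add hθ0 hA Abar hxl, hmane,
    fun x y z => (hmane x y z).trans (add_le_add_left (manePotential_le_peierlsBarrier x y) _)⟩

/-- `h_A(x, z) ≤ liminf_l φ_A(x, x̄_l) + h_A(x̄, z)` for any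
sequence `x̄_l → x̄`; in particular `h_A(x, z) ≤ φ_A(x, y) + h_A(y, z)` and
`h_A` satisfies the triangle inequality. -/
theorem peierls_liminf_triangle {X : Type*} [MetricSpace X] [CompactSpace X] [Nonempty X]
    [MeasurableSpace X] [BorelSpace X]
    (T : X → X) (hT : IsExpandingTransitive T)
    (θ : ℝ) (hθ0 : 0 < θ) (hθ1 : θ ≤ 1)
    (A : X → ℝ) (hA : IsThetaHolder θ A)
    (Abar : ℝ) (hAbar : IsErgMinValue T A Abar) :
    (∀ x xb z : X, ∀ xl : ℕ → X, Filter.Tendsto xl Filter.atTop (nhds xb) →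
      peierlsBarrier T A Abar x z ≤
        Filter.liminf (fun l : ℕ => manePotential T A Abar x (xl l)) Filter.atTop +
          peierlsBarrier T A Abar xb z) ∧
    (∀ x y z : X, peierlsBarrier T A Abar x z ≤
      manePotential T A Abar x y + peierlsBarrier T A Abar y z) ∧
    (∀ x y z : X, peierlsBarrier T A Abar x z ≤
      peierlsBarrier T A Abar x y + peierlsBarrier T A Abar y z) :=
  peierls_liminf_triangle_general T hT θ hθ0 A hA Abar
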